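/- arXiv:2509.17258 — 4 statements merged into one kernel-verified Lean document; each statement's English description precedes it below -/
import Mathlib

section
/- Let d, k, n be positive integers with n ≡ k (mod d) and let ζ be a primitive d-th root of unity. Then the q-binomial coefficient [n choose k]_q evaluated at q = ζ equals the ordinary binomial coefficient C(⌊n/d⌋, ⌊k/d⌋). -/
open Polynomial in
/-- The Gaussian binomial coefficient `[n choose k]_q` as an integer polynomial in `q`,
defined via the `q`-Pascal recursion
`[n+1 choose k+1]_q = [n choose k]_q + q^{k+1}·[n choose k+1]_q`;
it equals `[n]_q!/([k]_q!·[n-k]_q!)`. -/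
noncomputable def qbinom : ℕ → ℕ → Polynomial ℤ
  | _, 0 => 1
  | 0, _ + 1 => 0
  | n + 1, k + 1 => qbinom n k + X ^ (k + 1) * qbinom n (k + 1)

/-!
At a primitive `d`-th root of unity `ζ` the values `[n choose k]_ζ` are determined by the
`q`-Pascal recursion, and `C(n / d, k / d) · [n % d choose k % d]_ζ` satisfies the same recursion
(`q`-Lucas). The only nontrivial input is that `[d choose j]_ζ = 0` for `0 < j < d`: by
absorption `[j]_q [d choose j]_q = [d]_q [d-1 choose j-1]_q`, and `[d]_ζ = 0` while `[j]_ζ ≠ 0`.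
When `n ≡ k (mod d)` the second factor is `[r choose r]_ζ = 1`.
-/

open Polynomial Finset

theorem Nat.mod_add_one_eq_of_dvd_add_one {d n : ℕ} (h : d ∣ n + 1) : n % d + 1 = d := by
  have hd : 0 < d := Nat.pos_of_dvd_of_pos h n.succ_pos
  have hdvd : d ∣ n % d + 1 := by
    rwa [← Nat.dvd_add_right (Nat.dvd_mul_right d (n / d)), ← add_assoc, Nat.div_add_mod]
  exact le_antisymm (Nat.mod_lt n hd) (Nat.le_of_dvd (Nat.succ_pos _) hdvd)

theorem Nat.add_one_mod_of_not_dvd {d n : ℕ} (h : ¬ d ∣ n + 1) : (n + 1) % d = n % d + 1 := by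
  rcases Nat.eq_zero_or_pos d with rfl | hd
  · simp
  have hlt : n % d + 1 < d := by
    refine lt_of_le_of_ne (Nat.mod_lt n hd) fun heq => h ⟨n / d + 1, ?_⟩
    have := Nat.div_add_mod n d
    rw [mul_add_one]; omega
  have h1 : 1 % d = 1 := Nat.one_mod_eq_one.mpr (by omega)
  rw [Nat.add_mod_of_add_mod_lt (by rwa [h1]), h1]

theorem qbinom_succ_succ (n k : ℕ) :
    qbinom (n + 1) (k + 1) = qbinom n k + X ^ (k + 1) * qbinom n (k + 1) := rfl

@[simp] theorem qbinom_zero_right (n : ℕ) : qbinom n 0 = 1 := by cases n <;> rfl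

theorem qbinom_of_lt : ∀ {n k : ℕ}, n < k → qbinom n k = 0
  | 0, _ + 1, _ => rfl
  | n + 1, k + 1, h => by
    rw [qbinom_succ_succ, qbinom_of_lt (by omega : n < k), qbinom_of_lt (by omega : n < k + 1)]
    ring

@[simp] theorem qbinom_self : ∀ n : ℕ, qbinom n n = 1
  | 0 => rfl
  | n + 1 => by rw [qbinom_succ_succ, qbinom_self n, qbinom_of_lt n.lt_succ_self]; ring

noncomputable def qint (m : ℕ) : ℤ[X] := ∑ i ∈ range m, X ^ i

@[simp] theorem qint_zero : qint 0 = 0 := rfl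

theorem qint_add (a b : ℕ) : qint (a + b) = qint a + X ^ a * qint b := by
  simp only [qint, sum_range_add, pow_add, mul_sum]

-- Each identity's inductive step needs both identities at the previous row.
theorem qint_mul_qbinom_succ (n : ℕ) :
    (∀ k, qint (k + 1) * qbinom (n + 1) (k + 1) = qint (n + 1) * qbinom n k) ∧
    (∀ k, qint (n + 1 - k) * qbinom (n + 1) k = qint (n + 1) * qbinom n k) := by
  induction n with
  | zero =>
    refine ⟨fun k => ?_, fun k => ?_⟩
    · rcases k with _ | k
      · simp
      · simp [qbinom_of_lt (by omega : 1 < k + 2), qbinom_of_lt (by omega : 0 < k + 1)]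
    · rcases k with _ | _ | k
      · simp
      · simp [qbinom_of_lt (by omega : 0 < 1)]
      · simp [qbinom_of_lt (by omega : 1 < k + 2), qbinom_of_lt (by omega : 0 < k + 2)]
  | succ n ih =>
    obtain ⟨ihA, ihB⟩ := ih
    have split {j : ℕ} (hj : j ≤ n + 1) :
        qint (n + 2) = qint (j + 1) + X ^ (j + 1) * qint (n + 1 - j) := by
      rw [← qint_add]; congr 1; omega
    refine ⟨fun k => ?_, fun k => ?_⟩
    · by_cases hk : k ≤ n + 1
      · rw [qbinom_succ_succ, split hk]
        linear_combination (X : ℤ[X]) ^ (k + 1) * (ihA k - ihB k)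
      · rw [qbinom_of_lt (by omega : n + 2 < k + 1), qbinom_of_lt (by omega : n + 1 < k)]
        ring
    · rcases k with _ | k
      · simp
      by_cases hk : k ≤ n
      · rw [show n + 2 - (k + 1) = n + 1 - k by omega, qbinom_succ_succ,
          split (by omega : k ≤ n + 1)]
        linear_combination ihB k - ihA k
      · rw [qbinom_of_lt (by omega : n + 1 < k + 1), mul_zero]
        rcases (by omega : k = n + 1 ∨ n + 1 < k) with rfl | hk'
        · simp
        · rw [qbinom_of_lt (by omega : n + 2 < k + 1), mul_zero]

section

variable {R : Type*} [CommRing R]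

@[simp] theorem aeval_qint (ζ : R) (m : ℕ) : aeval ζ (qint m) = ∑ i ∈ range m, ζ ^ i := by
  simp [qint]

theorem aeval_qbinom_succ_succ (ζ : R) (n k : ℕ) :
    aeval ζ (qbinom (n + 1) (k + 1)) =
      aeval ζ (qbinom n k) + ζ ^ (k + 1) * aeval ζ (qbinom n (k + 1)) := by
  simp [qbinom_succ_succ]

theorem aeval_qbinom_eq_of_pascal (ζ : R) (f : ℕ → ℕ → R) (hzero : ∀ n, f n 0 = 1)
    (hzero_left : ∀ k, f 0 (k + 1) = 0)
    (hsucc : ∀ n k, f (n + 1) (k + 1) = f n k + ζ ^ (k + 1) * f n (k + 1)) :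
    ∀ n k, aeval ζ (qbinom n k) = f n k
  | n, 0 => by simp [hzero]
  | 0, k + 1 => by simp [qbinom_of_lt k.succ_pos, hzero_left]
  | n + 1, k + 1 => by
    rw [aeval_qbinom_succ_succ, aeval_qbinom_eq_of_pascal ζ f hzero hzero_left hsucc n k,
      aeval_qbinom_eq_of_pascal ζ f hzero hzero_left hsucc n (k + 1), hsucc]

theorem IsPrimitiveRoot.aeval_qbinom_eq_zero [IsDomain R] {ζ : R} {d j : ℕ}
    (hζ : IsPrimitiveRoot ζ d) (hj : 0 < j) (hjd : j < d) : aeval ζ (qbinom d j) = 0 := by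
  obtain ⟨n, rfl⟩ : ∃ n, d = n + 1 := ⟨d - 1, by omega⟩
  obtain ⟨k, rfl⟩ : ∃ k, j = k + 1 := ⟨j - 1, by omega⟩
  have h := congrArg (aeval ζ) ((qint_mul_qbinom_succ n).1 k)
  simp only [map_mul, aeval_qint, hζ.geom_sum_eq_zero (by omega), zero_mul] at h
  refine (mul_eq_zero.mp h).resolve_left (left_ne_zero_of_mul (b := ζ - 1) ?_)
  rw [geom_sum_mul]
  exact sub_ne_zero.mpr (hζ.pow_ne_one_of_pos_of_lt hj.ne' hjd)

theorem IsPrimitiveRoot.choose_mul_aeval_qbinom_succ_succ [IsDomain R] {ζ : R} {d : ℕ}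
    (hζ : IsPrimitiveRoot ζ d) (n k : ℕ) :
    ((n + 1) / d).choose ((k + 1) / d) * aeval ζ (qbinom ((n + 1) % d) ((k + 1) % d)) =
      (n / d).choose (k / d) * aeval ζ (qbinom (n % d) (k % d)) +
        ζ ^ (k + 1) * ((n / d).choose ((k + 1) / d) * aeval ζ (qbinom (n % d) ((k + 1) % d))) := by
  have hpow : ζ ^ (k + 1) = ζ ^ ((k + 1) % d) := by rw [hζ.eq_orderOf, pow_mod_orderOf]
  by_cases hn : d ∣ n + 1 <;> by_cases hk : d ∣ k + 1
  · have hn' := Nat.mod_add_one_eq_of_dvd_add_one hn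
    have hk' := Nat.mod_add_one_eq_of_dvd_add_one hk
    rw [Nat.succ_div_of_dvd hn, Nat.succ_div_of_dvd hk, Nat.mod_eq_zero_of_dvd hn,
      Nat.mod_eq_zero_of_dvd hk, (by omega : n % d = k % d), (hζ.pow_eq_one_iff_dvd _).2 hk,
      Nat.choose_succ_succ']
    push_cast
    simp
  · have hn' := Nat.mod_add_one_eq_of_dvd_add_one hn
    have hk' := Nat.add_one_mod_of_not_dvd hk
    have hlt := Nat.mod_lt (k + 1) (Nat.pos_of_dvd_of_pos hn n.succ_pos)
    have hvanish : aeval ζ (qbinom (n % d + 1) (k % d + 1)) = 0 := by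
      rw [hn']; exact hζ.aeval_qbinom_eq_zero (by omega) (by omega)
    -- Pascal splits `[d choose k % d + 1]_ζ = 0` into exactly the right-hand side.
    rw [aeval_qbinom_succ_succ] at hvanish
    rw [Nat.succ_div_of_dvd hn, Nat.succ_div_of_not_dvd hk, Nat.mod_eq_zero_of_dvd hn, hk', hpow,
      hk', qbinom_of_lt (Nat.succ_pos _), map_zero]
    linear_combination (-((n / d).choose (k / d) : R)) * hvanish
  · have hn' := Nat.add_one_mod_of_not_dvd hn
    have hk' := Nat.mod_add_one_eq_of_dvd_add_one hk
    have hlt := Nat.mod_lt (n + 1) (Nat.pos_of_dvd_of_pos hk k.succ_pos)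
    rw [Nat.succ_div_of_not_dvd hn, Nat.succ_div_of_dvd hk, hn', Nat.mod_eq_zero_of_dvd hk,
      (hζ.pow_eq_one_iff_dvd _).2 hk, qbinom_of_lt (by omega : n % d < k % d)]
    simp
  · rw [Nat.succ_div_of_not_dvd hn, Nat.succ_div_of_not_dvd hk, Nat.add_one_mod_of_not_dvd hn,
      hpow, Nat.add_one_mod_of_not_dvd hk, aeval_qbinom_succ_succ]
    ring

theorem IsPrimitiveRoot.aeval_qbinom [IsDomain R] {ζ : R} {d : ℕ} (hζ : IsPrimitiveRoot ζ d)
    (n k : ℕ) :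
    aeval ζ (qbinom n k) = (n / d).choose (k / d) * aeval ζ (qbinom (n % d) (k % d)) := by
  refine aeval_qbinom_eq_of_pascal ζ
    (fun a b => ((a / d).choose (b / d) : R) * aeval ζ (qbinom (a % d) (b % d)))
    (fun n => by simp) (fun k => ?_) hζ.choose_mul_aeval_qbinom_succ_succ n k
  rcases Nat.eq_zero_or_pos ((k + 1) / d) with h | h
  · have hmod := Nat.mod_add_div (k + 1) d
    rw [h, mul_zero, add_zero] at hmod
    simp [hmod, qbinom_of_lt k.succ_pos]
  · simp [Nat.choose_eq_zero_of_lt h]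

end

theorem stmt1_general (d k n : ℕ) (hmod : n % d = k % d) (ζ : ℂ) (hζ : IsPrimitiveRoot ζ d) :
    Polynomial.aeval ζ (qbinom n k) = (Nat.choose (n / d) (k / d) : ℂ) := by
  rw [hζ.aeval_qbinom, hmod, qbinom_self, map_one, mul_one]

/-- for positive integers `d, k, n` with `n ≡ k (mod d)` and `ζ` a primitive
`d`-th root of unity, `[n choose k]_q` evaluated at `q = ζ` equals `C(⌊n/d⌋, ⌊k/d⌋)`. -/
theorem stmt1 (d k n : ℕ) (hd : 0 < d) (hk : 0 < k) (hn : 0 < n)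
    (hmod : n % d = k % d) (ζ : ℂ) (hζ : IsPrimitiveRoot ζ d) :
    Polynomial.aeval ζ (qbinom n k) = (Nat.choose (n / d) (k / d) : ℂ) :=
  stmt1_general d k n hmod ζ hζ
end

section
/- Let μ = (μ_1,...,μ_n) with k = Σ μ_i even, n = Σ i·μ_i, and all μ_i even, with 2 dividing n+2. Then a_μ(-1) = C((n+k)/2, k/2) · multinomial(k/2; μ_1/2,...,μ_n/2), where a_μ(q) = (1/[n+1]_q)·[n+k choose k]_q·[k choose μ_1,...,μ_n]_q. -/
open Polynomial in
/-- The `q`-integer `[m]_q = 1 + q + ⋯ + q^{m-1}` as an integer polynomial. -/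
noncomputable def qnat (m : ℕ) : Polynomial ℤ := ∑ i ∈ Finset.range m, X ^ i

/-- The `q`-multinomial coefficient `[k choose μ_1,…,μ_n]_q = [k]_q!/([μ_1]_q!⋯[μ_n]_q!)`
(where `k = Σ μ_i`), written as a product of Gaussian binomials
`∏_i [μ_1+⋯+μ_i choose μ_i]_q`. -/
noncomputable def qmultinom (n : ℕ) (μ : Fin n → ℕ) : Polynomial ℤ :=
  ∏ i : Fin n, qbinom (∑ j ∈ Finset.univ.filter (fun j : Fin n => j ≤ i), μ j) (μ i)


/-!
At `q = -1` the `q`-Pascal rule `[n+1, k+1] = [n, k] + q^(k+1) [n, k+1]` collapses to the ordinary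
Pascal rule at half size, so `[n choose k]_{-1} = C(⌊n/2⌋, ⌊k/2⌋)` except when `n` is even and `k`
odd, where it vanishes. For `n` even `[n+1]_{-1} = 1`, and since all `μ_i` and all partial sums are
even, each Gaussian factor of the `q`-multinomial becomes an ordinary binomial of the halves; the
product of these telescopes to the multinomial coefficient of `μ / 2`.
-/

open Polynomial Finset

theorem eval_neg_one_qbinom (n k : ℕ) :
    (qbinom n k).eval (-1) = if Even n ∧ Odd k then 0 else ((n / 2).choose (k / 2) : ℤ) := by
  induction n generalizing k with
  | zero =>
    rcases k with _ | k
    · simp [qbinom]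
    · simp only [qbinom, eval_zero]
      split_ifs with hk
      · rfl
      · rw [Nat.zero_div, Nat.choose_eq_zero_of_lt (by grind), Nat.cast_zero]
  | succ n ih =>
    cases k with
    | zero => simp [qbinom]
    | succ k =>
      rw [qbinom_succ_succ, eval_add, eval_mul, eval_pow, eval_X, ih, ih]
      obtain ⟨a, rfl | rfl⟩ := Nat.even_or_odd' n <;> obtain ⟨b, rfl | rfl⟩ := Nat.even_or_odd' k
      all_goals simp [parity_simps, Nat.mul_add_div, pow_succ, pow_mul,
        show ∀ m, (2 * m + 1 + 1) / 2 = m + 1 by omega, Nat.choose_succ_succ']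

theorem eval_neg_one_qbinom_two_mul (n b : ℕ) :
    (qbinom n (2 * b)).eval (-1) = ((n / 2).choose b : ℤ) := by
  simp [eval_neg_one_qbinom]

theorem eval_neg_one_qnat (m : ℕ) : (qnat m).eval (-1) = if Even m then 0 else 1 := by
  simp [qnat, eval_finsetSum, neg_one_geom_sum]

theorem Nat.multinomial_map {α β : Type*} (s : Finset α) (e : α ↪ β) (f : β → ℕ) :
    Nat.multinomial (s.map e) f = Nat.multinomial s (f ∘ e) := by
  simp [Nat.multinomial, sum_map, prod_map]

theorem Nat.prod_choose_sum_Iic_eq_multinomial :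
    ∀ {n : ℕ} (ν : Fin n → ℕ), ∏ i, (∑ j ∈ Iic i, ν j).choose (ν i) = Nat.multinomial univ ν
  | 0, ν => by simp
  | n + 1, ν => by
    conv_rhs => rw [Fin.univ_castSuccEmb, Nat.multinomial_cons, Nat.multinomial_map,
      ← Nat.prod_choose_sum_Iic_eq_multinomial]
    have hlast : Iic (Fin.last n) = univ := eq_univ_of_forall fun i => mem_Iic.2 i.le_last
    simp [Fin.prod_univ_castSucc, ← Fin.map_castSuccEmb_Iic, sum_map, mul_comm, hlast,
      Fin.sum_univ_castSucc, add_comm]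

theorem eval_neg_one_qmultinom_two_mul {n : ℕ} (ν : Fin n → ℕ) :
    (qmultinom n (fun i => 2 * ν i)).eval (-1) = Nat.multinomial univ ν := by
  simp only [qmultinom, eval_prod, filter_ge_eq_Iic, ← mul_sum, eval_neg_one_qbinom_two_mul,
    Nat.mul_div_cancel_left _ two_pos]
  exact_mod_cast Nat.prod_choose_sum_Iic_eq_multinomial ν

theorem stmt4_general (n k : ℕ) (μ : Fin n → ℕ)
    (hk : k = ∑ i, μ i)
    (heven : ∀ i : Fin n, 2 ∣ μ i) (h2 : 2 ∣ n + 2)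
    (P : Polynomial ℤ) (hP : qnat (n + 1) * P = qbinom (n + k) k * qmultinom n μ) :
    Polynomial.eval (-1 : ℤ) P =
      ((Nat.choose ((n + k) / 2) (k / 2) *
        Nat.multinomial Finset.univ (fun i => μ i / 2) : ℕ) : ℤ) := by
  obtain ⟨ν, rfl⟩ : ∃ ν : Fin n → ℕ, μ = fun i => 2 * ν i :=
    ⟨fun i => μ i / 2, funext fun i => (Nat.mul_div_cancel' (heven i)).symm⟩
  obtain rfl : k = 2 * ∑ i, ν i := by rw [hk, mul_sum]
  have hn : ¬Even (n + 1) := by rw [Nat.not_even_iff_odd, Nat.odd_iff]; omega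
  have h := congrArg (eval (-1)) hP
  simp only [eval_mul, eval_neg_one_qnat, hn, if_false, one_mul, eval_neg_one_qbinom_two_mul,
    eval_neg_one_qmultinom_two_mul] at h
  simp [h, Nat.mul_div_cancel_left _ two_pos]

/-- for `μ` with all parts even (hence `k = Σ μ_i` even) and `2 ∣ n+2`,
the polynomial `a_μ(q)` (characterized by
`[n+1]_q·a_μ(q) = [n+k choose k]_q·[k choose μ]_q`) evaluates at `q = -1` to
`C((n+k)/2, k/2)·multinomial(k/2; μ_1/2,…,μ_n/2)`. -/
theorem stmt4 (n k : ℕ) (μ : Fin n → ℕ)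
    (hk : k = ∑ i, μ i) (hn : n = ∑ i, (i.val + 1) * μ i)
    (heven : ∀ i : Fin n, 2 ∣ μ i) (h2 : 2 ∣ n + 2)
    (P : Polynomial ℤ) (hP : qnat (n + 1) * P = qbinom (n + k) k * qmultinom n μ) :
    Polynomial.eval (-1 : ℤ) P =
      ((Nat.choose ((n + k) / 2) (k / 2) *
        Nat.multinomial Finset.univ (fun i => μ i / 2) : ℕ) : ℤ) :=
  stmt4_general n k μ hk heven h2 P hP
end

section
/- Let μ = (μ_1,...,μ_n) with k = Σ μ_i and n = Σ i·μ_i, and let d divide n+2 with d > 1. If μ does not satisfy either (i) exactly one index j with μ_j ≡ 1 (mod d) and μ_i ≡ 0 (mod d) for all i ≠ j, or (ii) d = 2 and all μ_i even, then the number of dissections of a convex (n+2)-gon of type μ that are invariant under rotation by 2π/d is 0. -/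
/-- Cyclic gap (number of clockwise steps) from vertex `a` to vertex `b` in an `N`-gon. -/
def gap (N : ℕ) (a b : Fin N) : ℕ := (b.val + N - a.val) % N

/-- `x` lies strictly inside the clockwise arc from `a` to `b`. -/
def Betw (N : ℕ) (a x b : Fin N) : Prop := 0 < gap N a x ∧ gap N a x < gap N a b

/-- A diagonal of the `N`-gon: an unordered pair of distinct, non-adjacent vertices. -/
def IsDiag (N : ℕ) (e : Sym2 (Fin N)) : Prop :=
  ∀ a b : Fin N, e = s(a, b) → 2 ≤ gap N a b ∧ 2 ≤ gap N b a

/-- Two chords cross if their endpoints strictly interleave around the polygon. -/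
def Crossing (N : ℕ) (e f : Sym2 (Fin N)) : Prop :=
  ∃ a b c d : Fin N, e = s(a, b) ∧ f = s(c, d) ∧ Betw N a c b ∧ Betw N b d a

/-- A dissection: a set of pairwise noncrossing diagonals. -/
def IsDissection (N : ℕ) (T : Finset (Sym2 (Fin N))) : Prop :=
  (∀ e ∈ T, IsDiag N e) ∧ ∀ e ∈ T, ∀ f ∈ T, e ≠ f → ¬ Crossing N e f

/-- `a` and `b` are joined by a boundary edge of the polygon or a diagonal of `T`. -/
def IsSide (N : ℕ) (T : Finset (Sym2 (Fin N))) (a b : Fin N) : Prop :=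
  gap N a b = 1 ∨ gap N b a = 1 ∨ s(a, b) ∈ T

/-- `a` and `b` are cyclically consecutive elements of `S`. -/
def Consec (N : ℕ) (S : Finset (Fin N)) (a b : Fin N) : Prop :=
  a ∈ S ∧ b ∈ S ∧ a ≠ b ∧ ∀ x ∈ S, ¬ Betw N a x b

/-- `S` is the vertex set of a subgon (face) of the dissection `T`. -/
def IsFace (N : ℕ) (T : Finset (Sym2 (Fin N))) (S : Finset (Fin N)) : Prop :=
  3 ≤ S.card ∧
  (∀ a b : Fin N, Consec N S a b → IsSide N T a b) ∧
  (∀ a b : Fin N, a ∈ S → b ∈ S → s(a, b) ∈ T → Consec N S a b)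

/-- Number of faces of `T` with exactly `p` vertices. -/
noncomputable def faceCount (N : ℕ) (T : Finset (Sym2 (Fin N))) (p : ℕ) : ℕ :=
  Nat.card {S : Finset (Fin N) // IsFace N T S ∧ S.card = p}

/-- The dissection `T` has type `μ`: exactly `μ i` faces which are `(i+3)`-gons
(`μ` is indexed so that `μ i` records `(i+1+2)`-gons, i.e. it is `μ_{i+1}` of the paper). -/
def HasType (N n : ℕ) (T : Finset (Sym2 (Fin N))) (μ : Fin n → ℕ) : Prop :=
  ∀ i : Fin n, faceCount N T (i.val + 3) = μ i

/-!
The rotation `t` by `(n + 2) / d` vertices has order `d` and lies in the group of rotations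
preserving the dissection, which permutes its faces. A face fixed by a nontrivial rotation is
unique: such a face is spread around the whole polygon, so if two distinct ones existed, a side of
one of them would be a diagonal with vertices of the other strictly on both of its sides, and some
side of the other would cross it. By Burnside's lemma, every non-fixed face then lies in an orbit
whose size is divisible by `d`, so `μ_i` is congruent modulo `d` to the number of invariant
`(i + 2)`-gons, which is `1` for at most one `i` and `0` otherwise. If it is `0` for every `i`,
then `d` divides `n = ∑ i μ_i` as well as `n + 2`, so `d = 2`.
-/

open Pointwise

section Gap

variable {N : ℕ}

lemma gap_lt (a b : Fin N) : gap N a b < N := Nat.mod_lt _ a.pos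

lemma val_add_gap_mod (a b : Fin N) : (a.val + gap N a b) % N = b.val := by
  rw [gap, Nat.add_mod_mod, show a.val + (b.val + N - a.val) = b.val + N by omega,
    Nat.add_mod_right, Nat.mod_eq_of_lt b.isLt]

lemma gap_eq_of_add_mod {a b : Fin N} {g : ℕ} (hg : g < N) (h : (a.val + g) % N = b.val) :
    gap N a b = g := by
  have h' : a.val + gap N a b ≡ a.val + g [MOD N] := (val_add_gap_mod a b).trans h.symm
  simpa [Nat.ModEq, Nat.mod_eq_of_lt hg, Nat.mod_eq_of_lt (gap_lt a b)] using
    Nat.ModEq.add_left_cancel' _ h'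

lemma gap_injective (a : Fin N) : Function.Injective (gap N a) := fun b c h =>
  Fin.ext ((val_add_gap_mod a b).symm.trans (h ▸ val_add_gap_mod a c))

lemma gap_self (a : Fin N) : gap N a a = 0 :=
  gap_eq_of_add_mod a.pos (by simp [Nat.mod_eq_of_lt a.isLt])

lemma gap_pos {a b : Fin N} (h : a ≠ b) : 0 < gap N a b :=
  Nat.pos_of_ne_zero fun h0 => h (gap_injective a (h0.trans (gap_self a).symm)).symm

lemma gap_eq_sub {a b c : Fin N} (h : gap N a b ≤ gap N a c) :
    gap N b c = gap N a c - gap N a b := by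
  have := gap_lt a c
  refine gap_eq_of_add_mod (by omega) ?_
  rw [← val_add_gap_mod a b, Nat.mod_add_mod, add_assoc, Nat.add_sub_cancel' h, val_add_gap_mod]

lemma gap_eq_sub_add {a b c : Fin N} (h : gap N a c < gap N a b) :
    gap N b c = N - gap N a b + gap N a c := by
  have := gap_lt a b
  refine gap_eq_of_add_mod (by omega) ?_
  rw [← val_add_gap_mod a b, Nat.mod_add_mod,
    show a.val + gap N a b + (N - gap N a b + gap N a c) = a.val + gap N a c + N by omega,
    Nat.add_mod_right, val_add_gap_mod]

lemma gap_add_gap {a b : Fin N} (h : a ≠ b) : gap N a b + gap N b a = N := by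
  have := gap_eq_sub_add (gap_self a ▸ gap_pos h : gap N a a < gap N a b)
  rw [gap_self] at this
  have := gap_lt a b
  omega

lemma gap_add_left [NeZero N] (c a b : Fin N) : gap N (c + a) (c + b) = gap N a b := by
  refine gap_eq_of_add_mod (gap_lt a b) ?_
  rw [Fin.val_add, Fin.val_add, Nat.mod_add_mod, add_assoc, Nat.add_mod, val_add_gap_mod,
    Nat.mod_eq_of_lt c.isLt]

lemma betw_add_left_iff [NeZero N] (c a x b : Fin N) :
    Betw N (c + a) (c + x) (c + b) ↔ Betw N a x b := by
  simp only [Betw, gap_add_left]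

lemma gap_add_left_eq [NeZero N] (a x t : Fin N) : gap N a (t + x) = (gap N a x + t.val) % N := by
  refine gap_eq_of_add_mod (Nat.mod_lt _ a.pos) ?_
  rw [Nat.add_mod_mod, ← add_assoc, ← Nat.mod_add_mod, val_add_gap_mod, Fin.val_add, add_comm]

lemma IsSide.mem_of_two_le_gap {T : Finset (Sym2 (Fin N))} {a b : Fin N} (h : IsSide N T a b)
    (hab : 2 ≤ gap N a b) (hba : 2 ≤ gap N b a) : s(a, b) ∈ T := by
  rcases h with h | h | h
  · omega
  · omega
  · exact h

lemma two_le_gap_of_betw {a x b : Fin N} (h : Betw N a x b) : 2 ≤ gap N a b := by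
  unfold Betw at h; omega

lemma Betw.ne_left {a x b : Fin N} (h : Betw N a x b) : x ≠ a := by
  rintro rfl; rw [Betw, gap_self] at h; omega

lemma Betw.ne_right {a x b : Fin N} (h : Betw N a x b) : x ≠ b := by
  rintro rfl; exact lt_irrefl _ h.2

lemma Betw.ne {a x b : Fin N} (h : Betw N a x b) : a ≠ b := by
  rintro rfl; rw [Betw, gap_self] at h; omega

end Gap

section Consec

variable {N : ℕ} {S : Finset (Fin N)}

lemma betw_or_betw {a b x : Fin N} (hab : a ≠ b) (hxa : x ≠ a) (hxb : x ≠ b) :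
    Betw N a x b ∨ Betw N b x a := by
  have h1 := gap_pos hxa.symm
  have h2 : gap N a x ≠ gap N a b := fun h => hxb (gap_injective a h)
  rcases Nat.lt_or_gt_of_ne h2 with h | h
  · exact Or.inl ⟨h1, h⟩
  · have := gap_eq_sub h.le
    have := gap_add_gap hab
    have := gap_lt a x
    exact Or.inr ⟨by omega, by omega⟩

lemma card_le_two_of_consec {a b : Fin N} (hab : Consec N S a b) (hba : Consec N S b a) :
    S.card ≤ 2 := by
  have hsub : S ⊆ {a, b} := fun x hx => by
    by_contra hx'
    simp only [Finset.mem_insert, Finset.mem_singleton, not_or] at hx'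
    rcases betw_or_betw hab.2.2.1 hx'.1 hx'.2 with h | h
    exacts [hab.2.2.2 x hx h, hba.2.2.2 x hx h]
  exact (Finset.card_le_card hsub).trans (Finset.card_le_two)

lemma exists_consec_right {c : Fin N} (hc : c ∈ S) (h2 : 2 ≤ S.card) : ∃ b, Consec N S c b := by
  have hne : (S.erase c).Nonempty := by
    rw [← Finset.card_pos, Finset.card_erase_of_mem hc]; omega
  obtain ⟨b, hb, hmin⟩ := Finset.exists_min_image (S.erase c) (gap N c) hne
  refine ⟨b, hc, Finset.mem_of_mem_erase hb, (Finset.ne_of_mem_erase hb).symm, ?_⟩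
  intro x hx hxb
  have := hmin x (Finset.mem_erase.2 ⟨hxb.ne_left, hx⟩)
  exact absurd hxb.2 (by omega)

lemma exists_consec_left {c : Fin N} (hc : c ∈ S) (h2 : 2 ≤ S.card) : ∃ p, Consec N S p c := by
  have hne : (S.erase c).Nonempty := by
    rw [← Finset.card_pos, Finset.card_erase_of_mem hc]; omega
  obtain ⟨p, hp, hmax⟩ := Finset.exists_max_image (S.erase c) (gap N c) hne
  have hpc : p ≠ c := Finset.ne_of_mem_erase hp
  refine ⟨p, Finset.mem_of_mem_erase hp, hc, hpc, ?_⟩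
  intro x hx hpx
  have hxp : gap N c x ≠ gap N c p := fun h => hpx.ne_left (gap_injective c h)
  have hlt := lt_of_le_of_ne (hmax x (Finset.mem_erase.2 ⟨hpx.ne_right, hx⟩)) hxp
  have := gap_eq_sub_add hlt
  have := gap_add_gap hpc
  exact absurd hpx.2 (by omega)

lemma exists_consec_betw (h2 : 2 ≤ S.card) {v : Fin N} (hv : v ∉ S) :
    ∃ a b, Consec N S a b ∧ Betw N a v b := by
  obtain ⟨a, ha, hmin⟩ := Finset.exists_min_image S (gap N · v) (Finset.card_pos.mp (by omega))
  obtain ⟨b, hab⟩ := exists_consec_right ha h2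
  have hav : 0 < gap N a v := gap_pos fun h => hv (h ▸ ha)
  refine ⟨a, b, hab, hav, ?_⟩
  by_contra hge
  have hvb : gap N a b ≠ gap N a v := fun h => hv (gap_injective a h ▸ hab.2.1)
  have := gap_eq_sub (a := a) (b := b) (c := v) (by omega)
  have := hmin b hab.2.1
  have := gap_pos hab.2.2.1
  omega

lemma add_mem_of_vadd_eq {t : Fin N} (hS : t +ᵥ S = S) {x : Fin N} (hx : x ∈ S) : t + x ∈ S :=
  hS ▸ Finset.vadd_mem_vadd_finset hx

lemma consec_vadd_iff [NeZero N] (c a b : Fin N) :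
    Consec N (c +ᵥ S) (c + a) (c + b) ↔ Consec N S a b := by
  simp only [Consec, Finset.mem_vadd_finset, vadd_eq_add, add_right_inj, exists_eq_right, ne_eq,
    forall_exists_index, and_imp, forall_apply_eq_imp_iff₂, betw_add_left_iff]

end Consec

section Invariant

variable {N : ℕ} [NeZero N] {S : Finset (Fin N)} {t : Fin N}

lemma two_mul_gap_lt_of_consec (hcard : 3 ≤ S.card) (ht : t ≠ 0) (hS : t +ᵥ S = S) {a b : Fin N}
    (hab : Consec N S a b) : 2 * gap N a b < N := by
  -- Otherwise `t` has to swap `a` and `b`, which leaves no room for a third vertex.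
  by_contra! hge
  have hab' : Consec N S (t + a) (t + b) := hS ▸ (consec_vadd_iff t a b).2 hab
  have hta : a ≠ t + a := fun h => ht (by simpa using h.symm)
  have hα : gap N a b ≤ gap N a (t + a) := by
    have := gap_pos hta
    by_contra! h
    exact hab.2.2.2 _ hab'.1 ⟨this, h⟩
  have hα' : gap N a b ≤ gap N (t + a) a := by
    have := gap_pos hta.symm
    by_contra! h
    exact hab'.2.2.2 _ hab.1 ⟨this, (gap_add_left t a b).symm ▸ h⟩
  have := gap_add_gap hta
  have := gap_lt a b
  have htab : t + a = b := gap_injective a (by omega)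
  have htba : t + b = a := by
    refine gap_injective b ?_
    have : gap N b (t + b) = gap N a b := by rw [← gap_add_left t a b, htab]
    have := gap_add_gap hab.2.2.1
    omega
  rw [htab, htba] at hab'
  have := card_le_two_of_consec hab hab'
  omega

lemma le_gap_add_val_of_vadd_eq (hne : S.Nonempty) (ht : t ≠ 0) (hS : t +ᵥ S = S) {a : Fin N}
    {g : ℕ} (hg : ∀ x ∈ S, gap N a x ≤ g) : N ≤ g + t.val := by
  obtain ⟨x, hx, hmax⟩ := Finset.exists_max_image S (gap N a) hne
  have h1 := hmax _ (add_mem_of_vadd_eq hS hx)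
  have := hg x hx
  have := Fin.pos_iff_ne_zero.2 ht
  rw [gap_add_left_eq] at h1
  by_contra! h
  rw [Nat.mod_eq_of_lt (by omega)] at h1
  omega

lemma exists_gap_lt_of_vadd_eq (hne : S.Nonempty) (ht : t ≠ 0) (hS : t +ᵥ S = S) (a : Fin N)
    {g : ℕ} (hg : 2 * g < N) : ∃ w ∈ S, g < gap N a w := by
  by_contra! hle
  have h1 := le_gap_add_val_of_vadd_eq hne ht hS hle
  have h2 := le_gap_add_val_of_vadd_eq hne (neg_ne_zero.2 ht) (neg_vadd_eq_iff.2 hS.symm) hle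
  have := Fin.pos_iff_ne_zero.2 ht
  rw [Fin.val_neg', Nat.mod_eq_of_lt (by omega)] at h2
  omega

end Invariant

section Straddle

variable {N : ℕ} {T : Finset (Sym2 (Fin N))} {S : Finset (Fin N)}

lemma betw_of_betw_of_betw {a b c e : Fin N} (hc : Betw N a c b) (he : Betw N b e a) :
    Betw N c b e := by
  have := gap_add_gap hc.ne
  have := gap_lt a e
  have hbe : gap N a b ≤ gap N a e := by
    by_contra! h
    have := gap_eq_sub_add h
    unfold Betw at he; omega
  have := gap_eq_sub hbe
  have := gap_eq_sub (a := a) (b := c) (c := b) (by unfold Betw at hc; omega)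
  have := gap_eq_sub (a := a) (b := c) (c := e) (by unfold Betw at hc; omega)
  unfold Betw at hc he ⊢
  omega

lemma not_consec_of_betw (hT : IsDissection N T) (hS : IsFace N T S) {a b c e : Fin N}
    (hab : s(a, b) ∈ T) (hce : Consec N S c e) (hc : Betw N a c b) (he : Betw N b e a) : False := by
  have h1 := two_le_gap_of_betw (betw_of_betw_of_betw hc he)
  have h2 := two_le_gap_of_betw (betw_of_betw_of_betw he hc)
  have hceT := (hS.2.1 c e hce).mem_of_two_le_gap h1 h2
  have hne : s(a, b) ≠ s(c, e) := by
    rw [Ne, Sym2.eq_iff]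
    rintro (⟨rfl, -⟩ | ⟨-, rfl⟩)
    exacts [hc.ne_left rfl, hc.ne_right rfl]
  exact hT.2 _ hab _ hceT hne ⟨a, b, c, e, rfl, rfl, hc, he⟩

lemma exists_consec_exit_right {a b v w : Fin N} (hv : v ∈ S) (hav : Betw N a v b) (hw : w ∈ S)
    (hbw : gap N a b < gap N a w) :
    ∃ c e, Consec N S c e ∧ Betw N a c b ∧ (e = b ∨ Betw N b e a) := by
  classical
  obtain ⟨c, hcF, hmax⟩ :=
    Finset.exists_max_image (S.filter (Betw N a · b)) (gap N a) ⟨v, by simp [hv, hav]⟩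
  rw [Finset.mem_filter] at hcF
  obtain ⟨hcS, hac, hcb⟩ := hcF
  obtain ⟨e, hce⟩ := exists_consec_right hcS (Finset.one_lt_card.2
    ⟨v, hv, w, hw, fun h => by subst h; unfold Betw at hav; omega⟩)
  have hcw : gap N c w = gap N a w - gap N a c := gap_eq_sub (by omega)
  have hew : gap N c e ≤ gap N c w := by
    by_contra! h
    exact hce.2.2.2 w hw ⟨by omega, h⟩
  have := gap_lt a w
  have hea : e ≠ a := by
    rintro rfl
    have := gap_add_gap hce.2.2.1
    omega
  have hae : ¬ Betw N a e b := by
    intro hae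
    have hle := hmax e (Finset.mem_filter.2 ⟨hce.2.1, hae⟩)
    have hlt : gap N a e < gap N a c :=
      lt_of_le_of_ne hle fun h => hce.2.2.1 (gap_injective a h).symm
    have := gap_eq_sub_add hlt
    omega
  refine ⟨c, e, hce, ⟨hac, hcb⟩, ?_⟩
  by_cases heb : e = b
  · exact Or.inl heb
  · exact Or.inr ((betw_or_betw hav.ne hea heb).resolve_left hae)

lemma exists_consec_exit_left {a b v w : Fin N} (hv : v ∈ S) (hav : Betw N a v b) (hw : w ∈ S)
    (hbw : gap N a b < gap N a w) :
    ∃ p c, Consec N S p c ∧ Betw N a c b ∧ (p = a ∨ Betw N b p a) := by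
  classical
  obtain ⟨c, hcF, hmin⟩ :=
    Finset.exists_min_image (S.filter (Betw N a · b)) (gap N a) ⟨v, by simp [hv, hav]⟩
  rw [Finset.mem_filter] at hcF
  obtain ⟨hcS, hac, hcb⟩ := hcF
  obtain ⟨p, hpc⟩ := exists_consec_left hcS (Finset.one_lt_card.2
    ⟨v, hv, w, hw, fun h => by subst h; unfold Betw at hav; omega⟩)
  have := gap_lt a w
  have hfar : ¬ (gap N a c < gap N a p ∧ gap N a p < gap N a w) := by
    rintro ⟨h1, h2⟩
    have := gap_eq_sub_add h1
    have := gap_eq_sub h2.le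
    exact hpc.2.2.2 w hw ⟨by omega, by omega⟩
  have hap : ¬ Betw N a p b := by
    intro hap
    have hle := hmin p (Finset.mem_filter.2 ⟨hpc.1, hap⟩)
    have hlt : gap N a c < gap N a p :=
      lt_of_le_of_ne hle fun h => hpc.2.2.1 (gap_injective a h).symm
    exact hfar ⟨hlt, by unfold Betw at hap; omega⟩
  have hpb : p ≠ b := by
    rintro rfl
    exact hfar ⟨hcb, hbw⟩
  refine ⟨p, c, hpc, ⟨hac, hcb⟩, ?_⟩
  by_cases hpa : p = a
  · exact Or.inl hpa
  · exact Or.inr ((betw_or_betw hav.ne hpa hpb).resolve_left hap)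

end Straddle

section Unique

variable {N : ℕ} [NeZero N] {T : Finset (Sym2 (Fin N))} {t : Fin N}

lemma subset_of_isFace_of_vadd_eq (hT : IsDissection N T) (ht : t ≠ 0) {S S' : Finset (Fin N)}
    (hS : IsFace N T S) (hS' : IsFace N T S') (hSt : t +ᵥ S = S) (hS't : t +ᵥ S' = S') :
    S' ⊆ S := by
  intro v hv'
  by_contra hv
  obtain ⟨a, b, hab, hav⟩ := exists_consec_betw (Nat.le_of_succ_le hS.1) hv
  have h2g := two_mul_gap_lt_of_consec hS.1 ht hSt hab
  have hg := two_le_gap_of_betw hav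
  have := gap_add_gap hab.2.2.1
  have habT := (hS.2.1 a b hab).mem_of_two_le_gap hg (by omega)
  -- `ab` is a diagonal of `T` with `v ∈ S'` strictly on one side, and `w ∈ S'` beyond `b`.
  obtain ⟨w, hw, hgw⟩ := exists_gap_lt_of_vadd_eq ⟨v, hv'⟩ ht hS't a h2g
  by_cases ha : a ∈ S'
  · by_cases hb : b ∈ S'
    · exact (hS'.2.2 a b ha hb habT).2.2.2 v hv' hav
    · obtain ⟨c, e, hce, hc, rfl | he⟩ := exists_consec_exit_right hv' hav hw hgw
      · exact hb hce.2.1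
      · exact not_consec_of_betw hT hS' habT hce hc he
  · obtain ⟨p, c, hpc, hc, rfl | hp⟩ := exists_consec_exit_left hv' hav hw hgw
    · exact ha hpc.1
    · exact not_consec_of_betw hT hS' (Sym2.eq_swap ▸ habT) hpc hp hc

lemma eq_of_isFace_of_vadd_eq (hT : IsDissection N T) (ht : t ≠ 0) {S S' : Finset (Fin N)}
    (hS : IsFace N T S) (hS' : IsFace N T S') (hSt : t +ᵥ S = S) (hS't : t +ᵥ S' = S') :
    S = S' :=
  (subset_of_isFace_of_vadd_eq hT ht hS' hS hS't hSt).antisymm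
    (subset_of_isFace_of_vadd_eq hT ht hS hS' hSt hS't)

end Unique

section Rotation

variable {N : ℕ} [NeZero N]

lemma image_image_sym2Map_add (T : Finset (Sym2 (Fin N))) (g h : Fin N) :
    (T.image (Sym2.map (· + g))).image (Sym2.map (· + h)) = T.image (Sym2.map (· + (g + h))) := by
  simp only [Finset.image_image, Sym2.map_map, Function.comp_def, add_assoc]

def rotationStabilizer (T : Finset (Sym2 (Fin N))) : AddSubgroup (Fin N) where
  carrier := {g | T.image (Sym2.map (· + g)) = T}
  zero_mem' := by simp
  add_mem' {g h} (hg : T.image _ = T) (hh : T.image _ = T) := show T.image _ = T by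
    rw [← image_image_sym2Map_add, hg, hh]
  neg_mem' {g} (hg : T.image _ = T) := show T.image _ = T by
    have := congrArg (·.image (Sym2.map (· + -g))) hg
    simp only [image_image_sym2Map_add, add_neg_cancel, add_zero, Sym2.map_id', Finset.image_id]
      at this
    exact this.symm

variable {T : Finset (Sym2 (Fin N))} {g : Fin N}

lemma mem_rotationStabilizer_iff : g ∈ rotationStabilizer T ↔ T.image (Sym2.map (· + g)) = T :=
  Iff.rfl

lemma sym2_mem_iff_of_mem_rotationStabilizer (hg : g ∈ rotationStabilizer T) (a b : Fin N) :
    s(g + a, g + b) ∈ T ↔ s(a, b) ∈ T := by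
  have hmap : s(g + a, g + b) = Sym2.map (· + g) s(a, b) := by simp [add_comm]
  conv_lhs => rw [hmap, ← mem_rotationStabilizer_iff.1 hg]
  exact (Sym2.map.injective (add_left_injective g)).mem_finset_image

lemma isSide_add_left_iff (hg : g ∈ rotationStabilizer T) (a b : Fin N) :
    IsSide N T (g + a) (g + b) ↔ IsSide N T a b := by
  simp only [IsSide, gap_add_left, sym2_mem_iff_of_mem_rotationStabilizer hg]

lemma IsFace.vadd (hg : g ∈ rotationStabilizer T) {S : Finset (Fin N)} (hS : IsFace N T S) :
    IsFace N T (g +ᵥ S) := by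
  refine ⟨(Finset.card_vadd_finset g S).symm ▸ hS.1, fun a' b' hab => ?_, fun a' b' ha hb hab => ?_⟩
  · obtain ⟨a, -, rfl⟩ := Finset.mem_vadd_finset.1 hab.1
    obtain ⟨b, -, rfl⟩ := Finset.mem_vadd_finset.1 hab.2.1
    exact (isSide_add_left_iff hg a b).2 (hS.2.1 a b ((consec_vadd_iff g a b).1 hab))
  · obtain ⟨a, haS, rfl⟩ := Finset.mem_vadd_finset.1 ha
    obtain ⟨b, hbS, rfl⟩ := Finset.mem_vadd_finset.1 hb
    exact (consec_vadd_iff g a b).2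
      (hS.2.2 a b haS hbS ((sym2_mem_iff_of_mem_rotationStabilizer hg a b).1 hab))

def facesOfCard (T : Finset (Sym2 (Fin N))) (p : ℕ) :
    SubAddAction (rotationStabilizer T) (Finset (Fin N)) where
  carrier := {S | IsFace N T S ∧ S.card = p}
  vadd_mem' g _ hS := ⟨hS.1.vadd g.2, (Finset.card_vadd_finset _ _).trans hS.2⟩

end Rotation

section Counting

open MulAction in
@[to_additive]
theorem MulAction.card_modEq_card_fixedPoints_of_fixedBy_subset {G α : Type*} [Group G]
    [Finite G] [MulAction G α] [Finite α] (h : ∀ g : G, g ≠ 1 → fixedBy α g ⊆ fixedPoints G α) :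
    Nat.card α ≡ Nat.card (fixedPoints G α) [MOD Nat.card G] := by
  classical
  have := Fintype.ofFinite G
  have := Fintype.ofFinite α
  -- Burnside's lemma, in which every `g ≠ 1` fixes exactly the global fixed points.
  have burnside :
      ∑ g : G, Nat.card (fixedBy α g) = Nat.card (orbitRel.Quotient G α) * Nat.card G := by
    simpa only [Nat.card_eq_fintype_card] using sum_card_fixedBy_eq_card_orbits_mul_card_group G α
  have hfix : ∀ g ∈ ({1}ᶜ : Finset G), Nat.card (fixedBy α g) = Nat.card (fixedPoints G α) :=
    fun g hg => congrArg (fun s : Set α => Nat.card s)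
      ((h g (by simpa using hg)).antisymm fun a ha => ha g)
  rw [Fintype.sum_eq_add_sum_compl 1, Finset.sum_congr rfl hfix, Finset.sum_const,
    Finset.card_compl, Finset.card_singleton, fixedBy_one_eq_univ, Nat.card_univ, smul_eq_mul,
    ← Nat.card_eq_fintype_card] at burnside
  have hG : 1 ≤ Nat.card G := Nat.card_pos
  rw [Nat.modEq_iff_dvd]
  refine ⟨Nat.card (fixedPoints G α) - Nat.card (orbitRel.Quotient G α), ?_⟩
  zify [hG] at burnside
  linear_combination -burnside

variable {N : ℕ} [NeZero N] {T : Finset (Sym2 (Fin N))}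

open AddAction

lemma faceCount_modEq_card_fixedPoints (hT : IsDissection N T) (p : ℕ) :
    faceCount N T p ≡ Nat.card (fixedPoints (rotationStabilizer T) (facesOfCard T p))
      [MOD Nat.card (rotationStabilizer T)] := by
  refine card_modEq_card_fixedPoints_of_fixedBy_subset (α := facesOfCard T p) fun g hg S hS h => ?_
  have hg' : (g : Fin N) ≠ 0 := by simpa using hg
  have hS' : (g : Fin N) +ᵥ (S : Finset (Fin N)) = S := congrArg Subtype.val hS
  refine Subtype.ext (eq_of_isFace_of_vadd_eq hT hg' (S.2.1.vadd h.2) S.2.1 ?_ hS')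
  change (g : Fin N) +ᵥ (h : Fin N) +ᵥ (S : Finset (Fin N)) = (h : Fin N) +ᵥ (S : Finset (Fin N))
  rw [vadd_comm, hS']

lemma coe_eq_of_mem_fixedPoints (hT : IsDissection N T) {t : Fin N}
    (ht : t ∈ rotationStabilizer T) (ht0 : t ≠ 0) {p p' : ℕ} {S : facesOfCard T p}
    {S' : facesOfCard T p'} (hS : S ∈ fixedPoints (rotationStabilizer T) (facesOfCard T p))
    (hS' : S' ∈ fixedPoints (rotationStabilizer T) (facesOfCard T p')) :
    (S : Finset (Fin N)) = S' :=
  eq_of_isFace_of_vadd_eq hT ht0 S.2.1 S'.2.1 (congrArg Subtype.val (hS ⟨t, ht⟩))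
    (congrArg Subtype.val (hS' ⟨t, ht⟩))

end Counting

lemma addOrderOf_ofNat_div {m d : ℕ} (hd : d ∣ m + 1) :
    addOrderOf (Fin.ofNat (m + 1) ((m + 1) / d)) = d := by
  change addOrderOf (((m + 1) / d : ℕ) : ZMod (m + 1)) = d
  rw [ZMod.addOrderOf_coe _ m.succ_ne_zero, Nat.gcd_eq_right (Nat.div_dvd_of_dvd hd),
    Nat.div_div_self hd m.succ_ne_zero]

lemma residue_condition_of_modEq {n d : ℕ} (μ c : Fin n → ℕ) (hn : n = ∑ i, (i.val + 1) * μ i)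
    (hd : d ∣ n + 2) (hd1 : 1 < d) (hμc : ∀ i, μ i ≡ c i [MOD d]) (hc1 : ∀ i, c i ≤ 1)
    (hc : ∀ i j, c i ≠ 0 → c j ≠ 0 → i = j) :
    (∃ j, μ j % d = 1 ∧ ∀ i, i ≠ j → μ i % d = 0) ∨ (d = 2 ∧ ∀ i, μ i % 2 = 0) := by
  by_cases h : ∃ j, c j ≠ 0
  · obtain ⟨j, hj⟩ := h
    refine Or.inl ⟨j, ?_, fun i hij => ?_⟩
    · rw [hμc j, show c j = 1 by have := hc1 j; omega, Nat.mod_eq_of_lt hd1]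
    · rw [hμc i, show c i = 0 from not_not.1 fun hi => hij (hc i j hi hj), Nat.zero_mod]
  · simp only [not_exists, not_not] at h
    have hμ : ∀ i, μ i % d = 0 := fun i => by rw [hμc i, h i, Nat.zero_mod]
    have hdn : d ∣ n :=
      hn ▸ Finset.dvd_sum fun i _ => Dvd.dvd.mul_left (Nat.dvd_of_mod_eq_zero (hμ i)) _
    have hd2 : d = 2 := le_antisymm (Nat.le_of_dvd two_pos ((Nat.dvd_add_right hdn).1 hd)) hd1
    exact Or.inr ⟨hd2, hd2 ▸ hμ⟩

theorem stmt5_general (n d : ℕ) (μ : Fin n → ℕ)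
    (hn : n = ∑ i, (i.val + 1) * μ i)
    (hd : d ∣ n + 2) (hd1 : 1 < d)
    (hnot : ¬ ((∃ j : Fin n, μ j % d = 1 ∧ ∀ i : Fin n, i ≠ j → μ i % d = 0) ∨
        (d = 2 ∧ ∀ i : Fin n, μ i % 2 = 0))) :
    Nat.card {T : Finset (Sym2 (Fin (n + 2))) //
        IsDissection (n + 2) T ∧ HasType (n + 2) n T μ ∧
        T.image (Sym2.map (fun x : Fin (n + 2) => x + (Fin.ofNat (n + 2) ((n + 2) / d : ℕ)))) = T}
      = 0 := by
  refine Nat.card_eq_zero.2 (Or.inl ((isEmpty_subtype _).2 ?_))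
  rintro T ⟨hT, htype, ht⟩
  set t := Fin.ofNat (n + 2) ((n + 2) / d)
  have horder : addOrderOf t = d := addOrderOf_ofNat_div hd
  have ht0 : t ≠ 0 := fun h => by rw [h, addOrderOf_zero] at horder; omega
  have hdvd : d ∣ Nat.card (rotationStabilizer T) :=
    horder ▸ Nat.card_zmultiples t ▸ AddSubgroup.card_dvd_of_le (AddSubgroup.zmultiples_le.2 ht)
  let c (i : Fin n) :=
    Nat.card (AddAction.fixedPoints (rotationStabilizer T) (facesOfCard T (i.val + 3)))
  refine hnot
    (residue_condition_of_modEq μ c hn hd hd1 (fun i => ?_) (fun i => ?_) fun i j hi hj => ?_)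
  · exact htype i ▸ (faceCount_modEq_card_fixedPoints hT _).of_dvd hdvd
  · exact Finite.card_le_one_iff_subsingleton.2
      ⟨fun S S' => Subtype.ext (Subtype.ext (coe_eq_of_mem_fixedPoints hT ht ht0 S.2 S'.2))⟩
  · obtain ⟨⟨S⟩, -⟩ := Nat.card_ne_zero.1 hi
    obtain ⟨⟨S'⟩, -⟩ := Nat.card_ne_zero.1 hj
    have := congrArg Finset.card (coe_eq_of_mem_fixedPoints hT ht ht0 S.2 S'.2)
    rw [S.1.2.2, S'.1.2.2] at this
    exact Fin.ext (by omega)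

/-- if `d ∣ n+2`, `d > 1`, and `μ` satisfies neither
(i) exactly one index `j` with `μ_j ≡ 1 (mod d)` and all other `μ_i ≡ 0 (mod d)`, nor
(ii) `d = 2` with all `μ_i` even, then no dissection of type `μ` of the `(n+2)`-gon is
invariant under rotation by `2π/d` (i.e. by `(n+2)/d` vertex positions). -/
theorem stmt5 (n k d : ℕ) (μ : Fin n → ℕ)
    (hk : k = ∑ i, μ i) (hn : n = ∑ i, (i.val + 1) * μ i)
    (hd : d ∣ n + 2) (hd1 : 1 < d)
    (hnot : ¬ ((∃ j : Fin n, μ j % d = 1 ∧ ∀ i : Fin n, i ≠ j → μ i % d = 0) ∨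
        (d = 2 ∧ ∀ i : Fin n, μ i % 2 = 0))) :
    Nat.card {T : Finset (Sym2 (Fin (n + 2))) //
        IsDissection (n + 2) T ∧ HasType (n + 2) n T μ ∧
        T.image (Sym2.map (fun x : Fin (n + 2) => x + (Fin.ofNat (n + 2) ((n + 2) / d : ℕ)))) = T}
      = 0 :=
  stmt5_general n d μ hn hd hd1 hnot
end

section
/- Let f be a positive-integer-valued frieze on the polygon P_n^⋆ with one interior orbifold point of order 3 (n ≥ 1). Then f is unitary: there exists a unique triangulation T of P_n^⋆ such that f(τ) = 1 for every arc τ ∈ T. -/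
/- Arcs on the orbifold polygon `P_n^⋆` (one interior orbifold point `⋆`) are encoded
as ordered pairs `(i, j)`: for `i ≠ j` the standard arc from `i` clockwise to `j`
(with `⋆` on the other side), and `(i, i)` the pending arc at `i` cutting out a monogon
containing `⋆`. The pair `(i, i+1)` encodes a boundary segment. -/

/-- Clockwise distance from `i` to `j`. -/
def ogap (n : ℕ) (i j : Fin n) : ℕ := (j.val + n - i.val) % n

/-- The clockwise length of the arc `(i, j)` (`n` for a pending arc). -/
def olen (n : ℕ) (i j : Fin n) : ℕ := if i = j then n else (j.val + n - i.val) % n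

/-- `(i, j)` is a genuine arc (not isotopic to a boundary segment). -/
def OValid (n : ℕ) (a : Fin n × Fin n) : Prop := 2 ≤ olen n a.1 a.2

/-- Two arcs of `P_n^⋆` cross (computed via their lifts to the universal cover). -/
def OCross (n : ℕ) (a b : Fin n × Fin n) : Prop :=
  (0 < ogap n a.1 b.1 ∧ ogap n a.1 b.1 < olen n a.1 a.2 ∧
    olen n a.1 a.2 < ogap n a.1 b.1 + olen n b.1 b.2) ∨
  (0 < ogap n b.1 a.1 ∧ ogap n b.1 a.1 < olen n b.1 b.2 ∧
    olen n b.1 b.2 < ogap n b.1 a.1 + olen n a.1 a.2)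

/-- A triangulation of `P_n^⋆`: a maximal set of pairwise noncrossing arcs. -/
def IsOTri (n : ℕ) (T : Finset (Fin n × Fin n)) : Prop :=
  (∀ a ∈ T, OValid n a) ∧
  (∀ a ∈ T, ∀ b ∈ T, a ≠ b → ¬ OCross n a b) ∧
  (∀ a : Fin n × Fin n, OValid n a → a ∉ T → ∃ b ∈ T, OCross n a b)

/-- The lift of `f` to the universal cover: `liftF f a b` is the value of `f` on the
arc whose lift joins positions `a` and `b`; in particular `liftF f a (a + n)` is the
value on the pending arc at `a` and `liftF f a (a+1)` is a boundary segment. -/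
def liftF (n : ℕ) [NeZero n] (f : Fin n × Fin n → ℤ) (a b : ℤ) : ℤ :=
  f (⟨(a : ZMod n).val, ZMod.val_lt _⟩, ⟨(b : ZMod n).val, ZMod.val_lt _⟩)

/-! Two arcs of value 1 never cross: for a single crossing the Ptolemy relation would write 1
as a sum of two positive integers, and a crossing that involves a pending arc, or two standard
arcs crossing twice, is ruled out by the pending skein relation together with one or two
Ptolemy relations. So at most one triangulation carries the value 1 on all of its arcs.

For existence, some ear `(i - 1, i + 1)` has value 1. Otherwise every Ptolemy relation around
an ear makes `j ↦ f(a, a + j)` convex, hence strictly increasing, so `f(0, 0) > f(0, n - 1)`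
and `f(n - 1, n - 1) > f(0, n - 1)`, which contradicts
`f(0, 0) f(n - 1, n - 1) = f(0, n - 1)² + f(0, n - 1) + 1`. Rotating that ear to the last
vertex and cutting it off leaves a frieze on `P_{n-1}^⋆`; a unitary triangulation of it,
together with the ear, is one for `f`. -/

structure IsOFrieze (n : ℕ) [NeZero n] (f : Fin n × Fin n → ℤ) : Prop where
  pos : ∀ p, 0 < f p
  boundary : ∀ i, f (i, i + 1) = 1
  ptolemy : ∀ a b c d : ℤ, a < b → b < c → c < d → d ≤ a + n →
    liftF n f a c * liftF n f b d = liftF n f a b * liftF n f c d + liftF n f a d * liftF n f b c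
  pending : ∀ i j, i ≠ j →
    f (i, i) * f (j, j) = f (i, j) ^ 2 + f (i, j) * f (j, i) + f (j, i) ^ 2

lemma lt_succ_of_two_mul_le_add {u : ℕ → ℤ} {N : ℕ} (h₀ : u 0 < u 1)
    (hconv : ∀ j, j + 2 ≤ N → 2 * u (j + 1) ≤ u j + u (j + 2)) :
    ∀ j, j < N → u j < u (j + 1) := by
  intro j
  induction j with
  | zero => exact fun _ => h₀
  | succ j ih =>
    intro hj
    have := hconv j (by omega); have := ih (by omega)
    show u (j + 1) < u (j + 2); omega

lemma OCross.symm {n : ℕ} {a b : Fin n × Fin n} (h : OCross n a b) : OCross n b a := Or.symm h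

lemma IsOTri.subset_of_forall_not_ocross {n : ℕ} {S T : Finset (Fin n × Fin n)}
    (hT : IsOTri n T) (hS : ∀ a ∈ S, OValid n a)
    (h : ∀ a ∈ S, ∀ b ∈ T, ¬ OCross n a b) : S ⊆ T := by
  intro a ha
  by_contra haT
  obtain ⟨b, hb, hab⟩ := hT.2.2 a (hS a ha) haT
  exact h a ha b hb hab

lemma IsOTri.map_equiv {n : ℕ} {T : Finset (Fin n × Fin n)} (hT : IsOTri n T)
    (e : (Fin n × Fin n) ≃ (Fin n × Fin n)) (hv : ∀ a, OValid n (e a) ↔ OValid n a)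
    (hc : ∀ a b, OCross n (e a) (e b) ↔ OCross n a b) : IsOTri n (T.map e.toEmbedding) := by
  obtain ⟨hvalid, hncross, hmax⟩ := hT
  refine ⟨fun a ha => ?_, fun a ha b hb hab => ?_, fun a ha haT => ?_⟩
  · obtain ⟨a', ha', rfl⟩ := Finset.mem_map.1 ha
    exact (hv a').2 (hvalid a' ha')
  · obtain ⟨a', ha', rfl⟩ := Finset.mem_map.1 ha
    obtain ⟨b', hb', rfl⟩ := Finset.mem_map.1 hb
    rw [Equiv.coe_toEmbedding, hc]
    exact hncross a' ha' b' hb' (ne_of_apply_ne _ hab)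
  · obtain ⟨b, hb, hab⟩ := hmax (e.symm a) (by rwa [← hv, e.apply_symm_apply])
      (by simpa [Finset.mem_map_equiv] using haT)
    exact ⟨e b, Finset.mem_map_of_mem _ hb, by rwa [← e.apply_symm_apply a, hc]⟩

section
open scoped Fin.CommRing

section Arcs
variable {n : ℕ}

lemma ogap_val (x y : Fin n) :
    ogap n x y = if y.val < x.val then y.val + n - x.val else y.val - x.val := by
  have hx := x.isLt; have hy := y.isLt
  unfold ogap
  split_ifs with h
  · exact Nat.mod_eq_of_lt (by omega)
  · rw [show y.val + n - x.val = y.val - x.val + n by omega, Nat.add_mod_right]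
    exact Nat.mod_eq_of_lt (by omega)

lemma olen_val (x y : Fin n) :
    olen n x y = if y.val ≤ x.val then y.val + n - x.val else y.val - x.val := by
  by_cases hxy : x = y
  · subst hxy; simp [olen]
  · have hv : x.val ≠ y.val := Fin.val_ne_of_ne hxy
    rw [olen, if_neg hxy, ← ogap, ogap_val]
    split_ifs <;> omega

lemma olen_le (x y : Fin n) : olen n x y ≤ n := by
  rw [olen_val]; split_ifs <;> omega

lemma ogap_eq_val_sub (x y : Fin n) : ogap n x y = (y - x).val := by
  rw [Fin.val_sub, ogap]; congr 1; have := x.isLt; omega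

lemma olen_eq_ite (x y : Fin n) : olen n x y = if x = y then n else ogap n x y := rfl

lemma olen_of_ne {x y : Fin n} (h : x ≠ y) : olen n x y = ogap n x y := if_neg h

variable [NeZero n]

lemma ogap_add_right (x y r : Fin n) : ogap n (x + r) (y + r) = ogap n x y := by
  simp only [ogap_eq_val_sub, add_sub_add_right_eq_sub]

lemma olen_add_right (x y r : Fin n) : olen n (x + r) (y + r) = olen n x y := by
  simp only [olen_eq_ite, add_left_inj, ogap_add_right]

lemma add_ogap (x y : Fin n) : x + (ogap n x y : Fin n) = y := by
  rw [ogap_eq_val_sub, Fin.cast_val_eq_self, add_sub_cancel]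

lemma add_olen (x y : Fin n) : x + (olen n x y : Fin n) = y := by
  by_cases h : x = y
  · simp [olen, h]
  · rw [olen_of_ne h, add_ogap]

end Arcs

section Lifts
variable {n : ℕ} [NeZero n] {f : Fin n × Fin n → ℤ}

lemma intCast_ne_intCast_of_lt {a b : ℤ} (hab : a < b) (hba : b < a + n) :
    (a : Fin n) ≠ (b : Fin n) := by
  intro h
  have hdvd := ((CharP.intCast_eq_intCast (Fin n) n).1 h).dvd
  have := Int.eq_zero_of_dvd_of_nonneg_of_lt (by omega) (by omega) hdvd
  omega

lemma intCast_add_natCast_self (a : ℤ) : ((a + n : ℤ) : Fin n) = a := by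
  push_cast; rw [Fin.natCast_self, add_zero]

lemma liftF_eq (f : Fin n × Fin n → ℤ) (a b : ℤ) : liftF n f a b = f (a, b) := by
  have key : ∀ z : ℤ, (⟨(z : ZMod n).val, ZMod.val_lt _⟩ : Fin n) = (z : Fin n) := by
    intro z
    have h₁ := ZMod.val_intCast (n := n) z
    have h₂ := Fin.val_intCast (n := n) z
    have h₃ : 0 ≤ z % n := Int.emod_nonneg z (by exact_mod_cast NeZero.ne n)
    ext; simp only; omega
  simp only [liftF, key]

lemma liftF_add_natCast_self (a b : ℤ) : liftF n f (a + n) (b + n) = liftF n f a b := by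
  simp only [liftF_eq, intCast_add_natCast_self]

lemma liftF_add_olen {z : ℤ} {x : Fin n} (hz : (z : Fin n) = x) (y : Fin n) :
    liftF n f z (z + olen n x y) = f (x, y) := by
  rw [liftF_eq]; push_cast; rw [hz, add_olen]

namespace IsOFrieze

lemma liftF_pos (hf : IsOFrieze n f) (a b : ℤ) : 0 < liftF n f a b := hf.pos _

lemma liftF_add_one (hf : IsOFrieze n f) (a : ℤ) : liftF n f a (a + 1) = 1 := by
  rw [liftF_eq]; push_cast; exact hf.boundary _

lemma liftF_sub_one_self (hf : IsOFrieze n f) (b : ℤ) : liftF n f (b - 1) b = 1 := by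
  simpa using hf.liftF_add_one (b - 1)

lemma liftF_pending (hf : IsOFrieze n f) {a b : ℤ} (hab : a < b) (hba : b < a + n) :
    liftF n f a (a + n) * liftF n f b (b + n) = liftF n f a b ^ 2
      + liftF n f a b * liftF n f b (a + n) + liftF n f b (a + n) ^ 2 := by
  simp only [liftF_eq, intCast_add_natCast_self]
  exact hf.pending _ _ (intCast_ne_intCast_of_lt hab hba)

end IsOFrieze
end Lifts

namespace IsOFrieze
variable {n : ℕ} [NeZero n] {f : Fin n × Fin n → ℤ}

lemma false_of_pending_inside (hf : IsOFrieze n f) {a b c : ℤ} (hab : a < b) (hbc : b < c)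
    (hca : c < a + n) (hac : liftF n f a c = 1) (hb : liftF n f b (b + n) = 1) : False := by
  have hpt := hf.ptolemy a b c (a + n) hab hbc hca le_rfl
  have hpe := hf.liftF_pending hab (by omega)
  rw [hac, one_mul] at hpt
  rw [hb, mul_one] at hpe
  have := hf.liftF_pos a b; have := hf.liftF_pos b (a + n); have := hf.liftF_pos c (a + n)
  have := hf.liftF_pos a (a + n); have := hf.liftF_pos b c
  nlinarith

lemma false_of_lift_cross (hf : IsOFrieze n f) {a b c d : ℤ} (hab : a < b) (hbc : b < c)
    (hcd : c < d) (hca : c ≤ a + n) (hdb : d ≤ b + n)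
    (hac : liftF n f a c = 1) (hbd : liftF n f b d = 1) : False := by
  have pos := hf.liftF_pos
  rcases le_or_gt d (a + n) with hda | hda
  · have hpt := hf.ptolemy a b c d hab hbc hcd hda
    rw [hac, hbd] at hpt
    nlinarith [pos a b, pos c d, pos a d, pos b c]
  -- a lift of length `n` is a pending arc
  rcases hca.eq_or_lt with rfl | hca
  · rcases hdb.eq_or_lt with rfl | hdb
    · have hpe := hf.liftF_pending hab (by omega)
      rw [hac, hbd] at hpe
      nlinarith [pos a b, pos b (a + n)]
    · have hb : liftF n f (a + n) (a + n + n) = 1 := by rwa [liftF_add_natCast_self]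
      exact hf.false_of_pending_inside (by omega) hda hdb hbd hb
  rcases hdb.eq_or_lt with rfl | hdb
  · exact hf.false_of_pending_inside hab hbc hca hac hbd
  -- two standard arcs crossing twice
  · have hpt₁ := hf.ptolemy a b c (a + n) hab hbc hca le_rfl
    have hpt₂ := hf.ptolemy b (a + n) d (b + n) (by omega) hda hdb (by omega)
    rw [hac, one_mul] at hpt₁
    rw [hbd, one_mul, liftF_add_natCast_self] at hpt₂
    nlinarith [pos a b, pos c (a + n), pos a (a + n), pos b c, pos d (b + n), pos b (b + n),
      pos (a + n) d, pos b (a + n)]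

lemma false_of_cross_of_ogap (hf : IsOFrieze n f) {a b : Fin n × Fin n}
    (h₁ : 0 < ogap n a.1 b.1) (h₂ : ogap n a.1 b.1 < olen n a.1 a.2)
    (h₃ : olen n a.1 a.2 < ogap n a.1 b.1 + olen n b.1 b.2)
    (ha : f a = 1) (hb : f b = 1) : False := by
  have hA : ((a.1.val : ℤ) : Fin n) = a.1 := by simp
  have hB : ((a.1.val + ogap n a.1 b.1 : ℤ) : Fin n) = b.1 := by push_cast; exact add_ogap _ _
  have hac := liftF_add_olen (f := f) hA a.2
  have hbd := liftF_add_olen (f := f) hB b.2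
  rw [ha] at hac
  rw [hb] at hbd
  have := olen_le a.1 a.2; have := olen_le b.1 b.2
  exact hf.false_of_lift_cross (by omega) (by omega) (by omega) (by omega) (by omega) hac hbd

lemma not_cross_of_eq_one (hf : IsOFrieze n f) {a b : Fin n × Fin n} (ha : f a = 1)
    (hb : f b = 1) : ¬ OCross n a b := by
  rintro (⟨h₁, h₂, h₃⟩ | ⟨h₁, h₂, h₃⟩)
  · exact hf.false_of_cross_of_ogap h₁ h₂ h₃ ha hb
  · exact hf.false_of_cross_of_ogap h₁ h₂ h₃ hb ha

lemma two_mul_liftF_le_left (hf : IsOFrieze n f) {a b : ℤ} (hab : a < b - 1)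
    (hba : b + 1 ≤ a + n) (hear : 2 ≤ liftF n f (b - 1) (b + 1)) :
    2 * liftF n f a b ≤ liftF n f a (b - 1) + liftF n f a (b + 1) := by
  have hpt := hf.ptolemy a (b - 1) b (b + 1) hab (by omega) (by omega) hba
  rw [hf.liftF_sub_one_self b, hf.liftF_add_one b] at hpt
  nlinarith [hf.liftF_pos a b]

lemma two_mul_liftF_le_right (hf : IsOFrieze n f) {b c : ℤ} (hbc : b + 1 < c)
    (hcb : c ≤ b - 1 + n) (hear : 2 ≤ liftF n f (b - 1) (b + 1)) :
    2 * liftF n f b c ≤ liftF n f (b + 1) c + liftF n f (b - 1) c := by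
  have hpt := hf.ptolemy (b - 1) b (b + 1) c (by omega) (by omega) hbc hcb
  rw [hf.liftF_sub_one_self b, hf.liftF_add_one b] at hpt
  nlinarith [hf.liftF_pos b c]

lemma liftF_lt_liftF_pending_right (hf : IsOFrieze n f) (hn : 2 ≤ n)
    (hear : ∀ z, 2 ≤ liftF n f (z - 1) (z + 1)) (a : ℤ) :
    liftF n f a (a + n - 1) < liftF n f a (a + n) := by
  have hu := lt_succ_of_two_mul_le_add (u := fun j : ℕ => liftF n f a (a + j + 1))
    (N := n - 1) ?_ (fun j hj => ?_) (n - 2) (by omega)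
  · convert hu using 2 <;> omega
  · have := hear (a + 1); have := hf.liftF_add_one a
    convert (by omega : liftF n f a (a + 1) < liftF n f (a + 1 - 1) (a + 1 + 1)) using 2 <;> simp
  · have := hf.two_mul_liftF_le_left (a := a) (b := a + j + 2) (by omega) (by omega) (hear _)
    push_cast; convert this using 3 <;> ring

lemma liftF_lt_liftF_pending_left (hf : IsOFrieze n f) (hn : 2 ≤ n)
    (hear : ∀ z, 2 ≤ liftF n f (z - 1) (z + 1)) (a : ℤ) :
    liftF n f (a + 1) (a + n) < liftF n f a (a + n) := by
  have hu := lt_succ_of_two_mul_le_add (u := fun j : ℕ => liftF n f (a + n - j - 1) (a + n))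
    (N := n - 1) ?_ (fun j hj => ?_) (n - 2) (by omega)
  · convert hu using 2 <;> omega
  · have := hear (a + n - 1); have := hf.liftF_sub_one_self (a + n)
    convert (by omega : liftF n f (a + n - 1) (a + n) < liftF n f (a + n - 1 - 1) (a + n - 1 + 1))
      using 2 <;> ring
  · have := hf.two_mul_liftF_le_right (b := a + n - j - 2) (c := a + n) (by omega) (by omega)
      (hear _)
    push_cast; convert this using 3 <;> ring

lemma exists_ear (hf : IsOFrieze n f) (hn : 2 ≤ n) : ∃ z, liftF n f (z - 1) (z + 1) = 1 := by
  by_contra! h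
  have hear : ∀ z, 2 ≤ liftF n f (z - 1) (z + 1) := fun z => by
    have := hf.liftF_pos (z - 1) (z + 1); have := h z; omega
  have hright := hf.liftF_lt_liftF_pending_right hn hear 0
  have hleft := hf.liftF_lt_liftF_pending_left hn hear (-1)
  have hpe := hf.liftF_pending (a := -1) (b := 0) (by omega) (by omega)
  have h₀ : liftF n f (-1) 0 = 1 := by simpa using hf.liftF_add_one (-1)
  simp only [zero_add, neg_add_cancel] at hright hleft hpe
  rw [h₀, ← sub_eq_neg_add] at hpe
  rw [← sub_eq_neg_add] at hleft
  nlinarith [hf.liftF_pos 0 (n - 1)]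

end IsOFrieze

section Rotation
variable {n : ℕ} [NeZero n]

def arcRotation (r : Fin n) : (Fin n × Fin n) ≃ (Fin n × Fin n) :=
  (Equiv.addRight r).prodCongr (Equiv.addRight r)

@[simp] lemma arcRotation_apply (r : Fin n) (a : Fin n × Fin n) :
    arcRotation r a = (a.1 + r, a.2 + r) := rfl

lemma IsOTri.map_arcRotation {T : Finset (Fin n × Fin n)} (hT : IsOTri n T) (r : Fin n) :
    IsOTri n (T.map (arcRotation r).toEmbedding) :=
  hT.map_equiv _ (fun a => by simp [OValid, olen_add_right])
    (fun a b => by simp [OCross, ogap_add_right, olen_add_right])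

variable {f : Fin n × Fin n → ℤ}

lemma liftF_comp_arcRotation (r : Fin n) (a b : ℤ) :
    liftF n (f ∘ arcRotation r) a b = liftF n f (a + r.val) (b + r.val) := by
  simp [liftF_eq]

lemma IsOFrieze.comp_arcRotation (hf : IsOFrieze n f) (r : Fin n) :
    IsOFrieze n (f ∘ arcRotation r) where
  pos _ := hf.pos _
  boundary i := by simpa [add_right_comm] using hf.boundary (i + r)
  ptolemy a b c d hab hbc hcd hda := by
    simp only [liftF_comp_arcRotation]
    exact hf.ptolemy _ _ _ _ (by omega) (by omega) (by omega) (by omega)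
  pending i j hij := hf.pending _ _ (by simpa using hij)

end Rotation

section EarRemoval
variable {m : ℕ}

def castSuccArc (m : ℕ) : Fin m × Fin m ↪ Fin (m + 1) × Fin (m + 1) :=
  Fin.castSuccEmb.prodMap Fin.castSuccEmb

@[simp] lemma castSuccArc_apply (a : Fin m × Fin m) :
    castSuccArc m a = (a.1.castSucc, a.2.castSucc) := rfl

def earArc (m : ℕ) : Fin (m + 1) × Fin (m + 1) := (⟨m - 1, by omega⟩, 0)

lemma ocross_castSuccArc_iff (a b : Fin m × Fin m) :
    OCross (m + 1) (castSuccArc m a) (castSuccArc m b) ↔ OCross m a b := by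
  have := a.1.isLt; have := a.2.isLt; have := b.1.isLt; have := b.2.isLt
  simp only [OCross, castSuccArc_apply, ogap_val, olen_val, Fin.val_castSucc]
  split_ifs <;> omega

lemma OValid.map_castSuccArc {a : Fin m × Fin m} (h : OValid m a) :
    OValid (m + 1) (castSuccArc m a) := by
  have := a.1.isLt; have := a.2.isLt
  simp only [OValid, castSuccArc_apply, olen_val, Fin.val_castSucc] at h ⊢
  split_ifs at h ⊢ <;> omega

lemma not_ocross_castSuccArc_earArc (a : Fin m × Fin m) :
    ¬ OCross (m + 1) (castSuccArc m a) (earArc m) := by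
  have := a.1.isLt; have := a.2.isLt
  simp only [OCross, castSuccArc_apply, earArc, ogap_val, olen_val, Fin.val_castSucc,
    Fin.val_zero, zero_le, ite_true]
  split_ifs <;> omega

lemma OValid.eq_earArc_or_ocross_or_castSuccArc {a : Fin (m + 1) × Fin (m + 1)}
    (h : OValid (m + 1) a) : a = earArc m ∨ OCross (m + 1) a (earArc m) ∨
      ∃ a', OValid m a' ∧ castSuccArc m a' = a := by
  have := a.1.isLt; have := a.2.isLt
  by_cases hlast : a.1.val = m ∨ a.2.val = m
  · right; left
    simp only [OValid, OCross, earArc, ogap_val, olen_val, Fin.val_zero, zero_le, ite_true]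
      at h ⊢
    split_ifs at h ⊢ <;> omega
  by_cases hear : a = earArc m
  · exact Or.inl hear
  have hear' : ¬ (a.1.val = m - 1 ∧ a.2.val = 0) := fun h' =>
    hear (Prod.ext (Fin.ext h'.1) (Fin.ext h'.2))
  refine Or.inr (Or.inr ⟨(⟨a.1.val, by omega⟩, ⟨a.2.val, by omega⟩), ?_, rfl⟩)
  simp only [OValid, olen_val] at h ⊢
  split_ifs at h ⊢ <;> omega

-- Position `z` on the universal cover of `P_m^⋆` goes to position `z + ⌊z / m⌋` on that of
-- `P_{m+1}^⋆`, skipping the lifts of the removed vertex `m`.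
def castSuccLift (m : ℕ) (z : ℤ) : ℤ := z + z / m

lemma castSuccLift_of_lt {z : ℤ} (h₀ : 0 ≤ z) (hm : z < m) : castSuccLift m z = z := by
  simp [castSuccLift, Int.ediv_eq_zero_of_lt h₀ hm]

variable [NeZero m]

lemma ovalid_earArc : OValid (m + 1) (earArc m) := by
  have := NeZero.pos m
  simp only [OValid, earArc, olen_val, Fin.val_zero, zero_le, ite_true]
  omega

lemma IsOTri.insert_earArc {T : Finset (Fin m × Fin m)} (hT : IsOTri m T) :
    IsOTri (m + 1) (insert (earArc m) (T.map (castSuccArc m))) := by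
  obtain ⟨hvalid, hncross, hmax⟩ := hT
  refine ⟨fun a ha => ?_, fun a ha b hb hab => ?_, fun a ha haT => ?_⟩
  · rcases Finset.mem_insert.1 ha with rfl | ha
    · exact ovalid_earArc
    · obtain ⟨a', ha', rfl⟩ := Finset.mem_map.1 ha
      exact (hvalid a' ha').map_castSuccArc
  · rcases Finset.mem_insert.1 ha with rfl | ha <;> rcases Finset.mem_insert.1 hb with rfl | hb
    · exact absurd rfl hab
    · obtain ⟨b', -, rfl⟩ := Finset.mem_map.1 hb
      exact fun h => not_ocross_castSuccArc_earArc b' h.symm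
    · obtain ⟨a', -, rfl⟩ := Finset.mem_map.1 ha
      exact not_ocross_castSuccArc_earArc a'
    · obtain ⟨a', ha', rfl⟩ := Finset.mem_map.1 ha
      obtain ⟨b', hb', rfl⟩ := Finset.mem_map.1 hb
      rw [ocross_castSuccArc_iff]
      exact hncross a' ha' b' hb' (ne_of_apply_ne _ hab)
  · rcases ha.eq_earArc_or_ocross_or_castSuccArc with rfl | hcross | ⟨a', ha', rfl⟩
    · exact absurd (Finset.mem_insert_self _ _) haT
    · exact ⟨earArc m, Finset.mem_insert_self _ _, hcross⟩
    · obtain ⟨b, hb, hab⟩ := hmax a' ha' fun h =>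
        haT (Finset.mem_insert_of_mem (Finset.mem_map_of_mem _ h))
      exact ⟨castSuccArc m b, Finset.mem_insert_of_mem (Finset.mem_map_of_mem _ hb),
        (ocross_castSuccArc_iff a' b).2 hab⟩

lemma castSuccLift_strictMono : StrictMono (castSuccLift m) := fun a b hab => by
  have := Int.ediv_le_ediv (by exact_mod_cast NeZero.pos m : (0 : ℤ) < m) hab.le
  simp only [castSuccLift]; omega

lemma castSuccLift_add_natCast (z : ℤ) :
    castSuccLift m (z + m) = castSuccLift m z + (m + 1) := by
  have := Int.add_ediv_of_dvd_right (a := z) (b := m) (c := m) dvd_rfl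
  rw [Int.ediv_self (by exact_mod_cast NeZero.ne m)] at this
  simp only [castSuccLift, this]; ring

lemma intCast_castSuccLift (z : ℤ) :
    ((castSuccLift m z : ℤ) : Fin (m + 1)) = (z : Fin m).castSucc := by
  have hm : (0 : ℤ) < m := by exact_mod_cast NeZero.pos m
  have h : castSuccLift m z = z % m + (m + 1) * (z / m) := by
    have := Int.mul_ediv_add_emod z m
    simp only [castSuccLift]; linear_combination -this
  have hmod : castSuccLift m z % ((m + 1 : ℕ) : ℤ) = z % m := by
    push_cast
    rw [h, Int.add_mul_emod_self_left]
    exact Int.emod_eq_of_lt (Int.emod_nonneg z hm.ne') (by have := Int.emod_lt_of_pos z hm; omega)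
  ext
  rw [Fin.val_castSucc, Fin.val_intCast, Fin.val_intCast, hmod]

variable {f : Fin (m + 1) × Fin (m + 1) → ℤ}

lemma liftF_comp_castSuccArc (a b : ℤ) :
    liftF m (f ∘ castSuccArc m) a b = liftF (m + 1) f (castSuccLift m a) (castSuccLift m b) := by
  simp [liftF_eq, intCast_castSuccLift]

lemma liftF_earArc : liftF (m + 1) f (m - 1) (m + 1) = f (earArc m) := by
  have hm := NeZero.pos m
  have h₁ : ((m : ℤ) - 1) % ((m + 1 : ℕ) : ℤ) = m - 1 :=
    Int.emod_eq_of_lt (by omega) (by omega)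
  rw [liftF_eq]
  congr 1
  ext
  · simp only [earArc, Fin.val_intCast, h₁]; omega
  · simp [earArc]

lemma IsOFrieze.comp_castSuccArc (hf : IsOFrieze (m + 1) f) (hear : f (earArc m) = 1) :
    IsOFrieze m (f ∘ castSuccArc m) where
  pos _ := hf.pos _
  boundary i := by
    have hi := i.isLt
    have h : (f ∘ castSuccArc m) (i, i + 1) =
        liftF (m + 1) f (castSuccLift m i.val) (castSuccLift m (i.val + 1)) := by
      rw [← liftF_comp_castSuccArc, liftF_eq]; simp
    rw [h, castSuccLift_of_lt (by omega) (by omega)]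
    rcases Nat.lt_or_ge (i.val + 1) m with hlt | hge
    · rw [castSuccLift_of_lt (by omega) (by omega)]
      exact hf.liftF_add_one _
    · have hi' : (i.val : ℤ) = m - 1 := by omega
      have hlast : castSuccLift m (m - 1 + 1) = m + 1 := by
        rw [castSuccLift, sub_add_cancel, Int.ediv_self (by exact_mod_cast NeZero.ne m)]
      rw [hi', hlast, liftF_earArc, hear]
  ptolemy a b c d hab hbc hcd hda := by
    simp only [liftF_comp_castSuccArc]
    have hmono := castSuccLift_strictMono (m := m)
    refine hf.ptolemy _ _ _ _ (hmono hab) (hmono hbc) (hmono hcd) ?_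
    have := hmono.monotone hda
    rw [castSuccLift_add_natCast] at this
    push_cast; exact this
  pending i j hij := hf.pending _ _ (by simpa using hij)

end EarRemoval

lemma isOTri_one_empty : IsOTri 1 ∅ :=
  ⟨by simp, by simp, fun a ha _ => absurd (olen_le a.1 a.2) (by unfold OValid at ha; omega)⟩

theorem IsOFrieze.exists_isOTri_forall_eq_one :
    ∀ {m : ℕ} {f : Fin (m + 1) × Fin (m + 1) → ℤ}, IsOFrieze (m + 1) f →
      ∃ T, IsOTri (m + 1) T ∧ ∀ τ ∈ T, f τ = 1
  | 0, _, _ => ⟨∅, isOTri_one_empty, by simp⟩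
  | m + 1, f, hf => by
    obtain ⟨z, hz⟩ := hf.exists_ear (by omega)
    -- rotating by `r` moves the ear `(z - 1, z + 1)` to `earArc (m + 1)`
    set r : Fin (m + 2) := ((z - (m + 1) : ℤ) : Fin (m + 2))
    have hear : (f ∘ arcRotation r) (earArc (m + 1)) = 1 := by
      refine Eq.trans ?_ hz
      rw [← liftF_earArc (m := m + 1) (f := f ∘ arcRotation r), liftF_comp_arcRotation,
        liftF_eq, liftF_eq (a := z - 1)]
      congr 2 <;> simp only [r] <;> push_cast <;> ring
    obtain ⟨T, hT, hT1⟩ :=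
      ((hf.comp_arcRotation r).comp_castSuccArc hear).exists_isOTri_forall_eq_one
    refine ⟨(insert (earArc (m + 1)) (T.map (castSuccArc (m + 1)))).map
      (arcRotation r).toEmbedding, hT.insert_earArc.map_arcRotation r, ?_⟩
    simp only [Finset.mem_map, Finset.mem_insert, Equiv.coe_toEmbedding]
    rintro _ ⟨τ, (rfl | ⟨τ, hτ, rfl⟩), rfl⟩
    · exact hear
    · exact hT1 τ hτ

end

/-- every positive integral frieze `f` on the polygon `P_n^⋆` with one
interior orbifold point of order 3 — i.e. `f = 1` on boundary segments, `f` satisfies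
the Ptolemy/skein relations for crossing standard arcs (formulated on the universal
cover, so that instances involving a pending arc as a resolved term are included), and
the pending–pending skein relation
`f(i,i)f(j,j) = f(i,j)² + λ₃·f(i,j)f(j,i) + f(j,i)²` with `λ₃ = 1` — is unitary:
there is a unique triangulation `T` of `P_n^⋆` with `f(τ) = 1` for all `τ ∈ T`. -/
theorem stmt17 (n : ℕ) [NeZero n] (f : Fin n × Fin n → ℤ)
    (hpos : ∀ p : Fin n × Fin n, 0 < f p)
    (hbd : ∀ i : Fin n, f (i, i + 1) = 1)
    (hptolemy : ∀ a b c d : ℤ, a < b → b < c → c < d → d ≤ a + n →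
      liftF n f a c * liftF n f b d
        = liftF n f a b * liftF n f c d + liftF n f a d * liftF n f b c)
    (hpend : ∀ i j : Fin n, i ≠ j →
      f (i, i) * f (j, j) = f (i, j) ^ 2 + f (i, j) * f (j, i) + f (j, i) ^ 2) :
    ∃! T : Finset (Fin n × Fin n), IsOTri n T ∧ ∀ τ ∈ T, f τ = 1 := by
  have hf : IsOFrieze n f := ⟨hpos, hbd, hptolemy, hpend⟩
  obtain ⟨m, rfl⟩ := Nat.exists_eq_succ_of_ne_zero (NeZero.ne n)
  obtain ⟨T, hT, hT1⟩ := hf.exists_isOTri_forall_eq_one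
  refine ⟨T, ⟨hT, hT1⟩, fun T' ⟨hT', hT'1⟩ => subset_antisymm ?_ ?_⟩
  · exact hT.subset_of_forall_not_ocross hT'.1 fun a ha b hb =>
      hf.not_cross_of_eq_one (hT'1 a ha) (hT1 b hb)
  · exact hT'.subset_of_forall_not_ocross hT.1 fun a ha b hb =>
      hf.not_cross_of_eq_one (hT1 a ha) (hT'1 b hb)
end
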